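/- In the reduced classification game, there cannot exist three distinct optimal 'Type II' extreme points of the defender's LP (with starting indices s, s+1, s+2): equality of their objective values would force μ_{s+1} = μ_{s+2}, contradicting strict monotonicity of μ. -/

import Mathlib

/-!
Type II points with starting indices `s` and `s + 1` normalize to strategies that agree except at
coordinates `s + 1` and `m + 1`, so the difference of their objective values can be computed
exactly: it is `(r_{s+1} - r_s) (1 - (μ_{s+1} - μ_{m+1}) / c_d)`. Two optimal strategies have equal
values, hence `μ_{s+1} - μ_{m+1} = c_d`. Applied to the pairs `(s, s + 1)` and `(s + 1, s + 2)`
this gives `μ_{s+1} = μ_{s+2}`, against strict monotonicity.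
-/

open Finset

/-- The defender's LP objective: min_i (Λβ)_i − μ'β. -/
noncomputable def lpObj (n : ℕ) (Λ : Fin (n+1) → Fin (n+2) → ℝ)
    (μ : Fin (n+2) → ℝ) (β : Fin (n+2) → ℝ) : ℝ :=
  (Finset.univ.inf' Finset.univ_nonempty fun i : Fin (n+1) => ∑ j, Λ i j * β j)
    - ∑ j, μ j * β j

/-- Membership in the polyhedron P = {x : Λx ≥ 1, x ≥ 0}. -/
def InPoly (n : ℕ) (Λ : Fin (n+1) → Fin (n+2) → ℝ) (x : Fin (n+2) → ℝ) : Prop :=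
  (∀ j, 0 ≤ x j) ∧ ∀ i, 1 ≤ ∑ j, Λ i j * x j

/-- `x` corresponds (via normalization β = x/‖x‖₁) to a defender Nash equilibrium
strategy, i.e. β maximizes min_i(Λβ)_i − μ'β over the simplex. -/
def CorrespondsToEq (n : ℕ) (Λ : Fin (n+1) → Fin (n+2) → ℝ)
    (μ : Fin (n+2) → ℝ) (x : Fin (n+2) → ℝ) : Prop :=
  0 < ∑ j, x j ∧
  ∀ β : Fin (n+2) → ℝ, (∀ j, 0 ≤ β j) → (∑ j, β j = 1) →
    lpObj n Λ μ β ≤ lpObj n Λ μ (fun j => x j / ∑ j', x j')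

/-- A 'Type II' point of the polyhedron with starting index s: zeros up to and
including index s, x_i = ((r_i − r_{i−1})/c_d)·‖x‖ > 0 for s+1 ≤ i ≤ m,
x_{m+1} ≥ 0, and all inequality constraints from row s through row m tight. -/
def TypeIIPt (n : ℕ) (Λ : Fin (n+1) → Fin (n+2) → ℝ) (r : Fin (n+1) → ℝ)
    (cd : ℝ) (x : Fin (n+2) → ℝ) (s : Fin (n+1)) : Prop :=
  (∀ j : Fin (n+2), (j : ℕ) ≤ (s : ℕ) → x j = 0) ∧
  (∀ i : ℕ, ∀ h1 : (s : ℕ) < i, ∀ h2 : i ≤ n,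
    x ⟨i, by omega⟩ = (r ⟨i, by omega⟩ - r ⟨i - 1, by omega⟩) / cd * ∑ j, x j ∧
    0 < x ⟨i, by omega⟩) ∧
  0 ≤ x (Fin.last (n+1)) ∧
  (∀ i : Fin (n+1), (s : ℕ) ≤ (i : ℕ) → ∑ j, Λ i j * x j = 1)

noncomputable def normalized {k : ℕ} (x : Fin k → ℝ) : Fin k → ℝ :=
  fun j => x j / ∑ j', x j'

lemma sum_normalized {k : ℕ} {x : Fin k → ℝ} (hS : ∑ j, x j ≠ 0) :
    ∑ j, normalized x j = 1 := by
  unfold normalized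
  rw [← sum_div, div_self hS]

lemma normalized_nonneg {k : ℕ} {x : Fin k → ℝ} (hx : ∀ j, 0 ≤ x j) (j : Fin k) :
    0 ≤ normalized x j :=
  div_nonneg (hx j) (sum_nonneg fun j _ => hx j)

lemma sum_mul_sub_sum_mul_eq_of_eq_off_two {ι : Type*} [Fintype ι] {μ u v : ι → ℝ} {a b : ι}
    (hab : a ≠ b) (hsum : ∑ j, u j = ∑ j, v j) (huv : ∀ j, j ≠ a → j ≠ b → u j = v j) :
    ∑ j, μ j * u j - ∑ j, μ j * v j = (μ a - μ b) * (u a - v a) := by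
  have hw : ∑ j, (u j - v j) = (u a - v a) + (u b - v b) :=
    sum_eq_add a b hab (fun c _ hc => sub_eq_zero.2 (huv c hc.1 hc.2)) (by simp) (by simp)
  have hμw : ∑ j, μ j * (u j - v j) = μ a * (u a - v a) + μ b * (u b - v b) :=
    sum_eq_add a b hab (fun c _ hc => by rw [huv c hc.1 hc.2, sub_self, mul_zero])
      (by simp) (by simp)
  rw [sum_sub_distrib, hsum, sub_self] at hw
  rw [← sum_sub_distrib]
  simp only [← mul_sub]
  linear_combination hμw - μ b * hw

section LP

variable {n : ℕ} {Λ : Fin (n+1) → Fin (n+2) → ℝ}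

lemma lpObj_normalized_of_row_eq_one {μ x : Fin (n+2) → ℝ} (hx : InPoly n Λ x)
    (hS : 0 < ∑ j, x j) {i₀ : Fin (n+1)} (hi₀ : ∑ j, Λ i₀ j * x j = 1) :
    lpObj n Λ μ (normalized x) = (∑ j, x j)⁻¹ - ∑ j, μ j * normalized x j := by
  have hrow : ∀ i, ∑ j, Λ i j * normalized x j = (∑ j, Λ i j * x j) / ∑ j, x j := fun i => by
    simp only [normalized, sum_div, mul_div_assoc]
  have hinf : univ.inf' univ_nonempty
      (fun i => ∑ j, Λ i j * normalized x j) = (∑ j, x j)⁻¹ := by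
    refine le_antisymm ?_ (le_inf' _ _ fun i _ => ?_)
    · exact (inf'_le _ (mem_univ i₀)).trans_eq (by rw [hrow, hi₀, one_div])
    · rw [hrow, inv_eq_one_div]
      exact div_le_div_of_nonneg_right (hx.2 i) hS.le
  rw [lpObj, hinf]

lemma CorrespondsToEq.lpObj_eq {μ x y : Fin (n+2) → ℝ} (hx : InPoly n Λ x) (hy : InPoly n Λ y)
    (hxeq : CorrespondsToEq n Λ μ x) (hyeq : CorrespondsToEq n Λ μ y) :
    lpObj n Λ μ (normalized x) = lpObj n Λ μ (normalized y) :=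
  le_antisymm
    (hyeq.2 _ (normalized_nonneg hx.1) (sum_normalized hxeq.1.ne'))
    (hxeq.2 _ (normalized_nonneg hy.1) (sum_normalized hyeq.1.ne'))

end LP

namespace TypeIIPt

variable {n : ℕ} {r : Fin (n+1) → ℝ} {cd ε : ℝ} {Λ : Fin (n+1) → Fin (n+2) → ℝ}
  {x y : Fin (n+2) → ℝ} {s : ℕ} {hsn : s < n + 1}

lemma inv_sum_eq
    (hΛ : ∀ i j, Λ i j =
      cd * (if (j : ℕ) ≤ (i : ℕ) then 1 else 0) - r i + (r (Fin.last n) + ε))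
    (hx : TypeIIPt n Λ r cd x ⟨s, hsn⟩) :
    (∑ j, x j)⁻¹ = r (Fin.last n) - r ⟨s, hsn⟩ + ε := by
  have hrow : ∑ j, Λ ⟨s, hsn⟩ j * x j = (r (Fin.last n) - r ⟨s, hsn⟩ + ε) * ∑ j, x j := by
    rw [mul_sum]
    refine sum_congr rfl fun j _ => ?_
    by_cases hj : (j : ℕ) ≤ s
    · simp [hx.1 j hj]
    · rw [hΛ, if_neg hj]
      ring
  exact (eq_inv_of_mul_eq_one_left (hrow ▸ hx.2.2.2 ⟨s, hsn⟩ le_rfl)).symm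

lemma normalized_eq_zero (hx : TypeIIPt n Λ r cd x ⟨s, hsn⟩) {j : Fin (n+2)} (hj : (j : ℕ) ≤ s) :
    normalized x j = 0 := by
  rw [normalized, hx.1 j hj, zero_div]

lemma normalized_eq (hx : TypeIIPt n Λ r cd x ⟨s, hsn⟩) (hS : ∑ j, x j ≠ 0) {i : ℕ}
    (h1 : s < i) (h2 : i ≤ n) :
    normalized x ⟨i, by omega⟩ = (r ⟨i, by omega⟩ - r ⟨i - 1, by omega⟩) / cd := by
  rw [normalized, (hx.2.1 i h1 h2).1, mul_div_assoc, div_self hS, mul_one]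

lemma lpObj_normalized {μ : Fin (n+2) → ℝ}
    (hΛ : ∀ i j, Λ i j =
      cd * (if (j : ℕ) ≤ (i : ℕ) then 1 else 0) - r i + (r (Fin.last n) + ε))
    (hpoly : InPoly n Λ x) (hx : TypeIIPt n Λ r cd x ⟨s, hsn⟩) (hS : 0 < ∑ j, x j) :
    lpObj n Λ μ (normalized x)
      = r (Fin.last n) - r ⟨s, hsn⟩ + ε - ∑ j, μ j * normalized x j := by
  rw [lpObj_normalized_of_row_eq_one hpoly hS (hx.2.2.2 ⟨s, hsn⟩ le_rfl), inv_sum_eq hΛ hx]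

lemma normalized_eq_normalized_of_succ (hs : s + 1 ≤ n)
    (hx : TypeIIPt n Λ r cd x ⟨s, by omega⟩) (hy : TypeIIPt n Λ r cd y ⟨s + 1, by omega⟩)
    (hSx : ∑ j, x j ≠ 0) (hSy : ∑ j, y j ≠ 0) (j : Fin (n+2))
    (hj₁ : j ≠ ⟨s + 1, by omega⟩) (hj₂ : j ≠ Fin.last (n+1)) :
    normalized x j = normalized y j := by
  obtain ⟨i, hi⟩ := j
  have hi₁ : i ≠ s + 1 := fun h => hj₁ (Fin.ext h)
  have hi₂ : i ≠ n + 1 := fun h => hj₂ (Fin.ext h)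
  rcases le_or_gt i s with his | his
  · rw [hx.normalized_eq_zero his, hy.normalized_eq_zero (by simp; omega)]
  · rw [hx.normalized_eq hSx his (by omega), hy.normalized_eq hSy (by omega) (by omega)]

lemma sub_mu_last_eq_of_correspondsToEq {μ : Fin (n+2) → ℝ}
    (hr : ∀ i j : Fin (n+1), i < j → r i < r j)
    (hΛ : ∀ i j, Λ i j =
      cd * (if (j : ℕ) ≤ (i : ℕ) then 1 else 0) - r i + (r (Fin.last n) + ε))
    (hs : s + 1 ≤ n) (hxP : InPoly n Λ x) (hyP : InPoly n Λ y)
    (hx : TypeIIPt n Λ r cd x ⟨s, by omega⟩) (hy : TypeIIPt n Λ r cd y ⟨s + 1, by omega⟩)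
    (hxeq : CorrespondsToEq n Λ μ x) (hyeq : CorrespondsToEq n Λ μ y) :
    μ ⟨s + 1, by omega⟩ - μ (Fin.last (n+1)) = cd := by
  have hobj := hxeq.lpObj_eq hxP hyP hyeq
  rw [hx.lpObj_normalized hΛ hxP hxeq.1, hy.lpObj_normalized hΛ hyP hyeq.1] at hobj
  have hdiff := sum_mul_sub_sum_mul_eq_of_eq_off_two (μ := μ)
    (Fin.ne_of_lt (Fin.mk_lt_mk.2 (by omega)) : (⟨s + 1, by omega⟩ : Fin (n+2)) ≠ Fin.last (n+1))
    (by rw [sum_normalized hxeq.1.ne', sum_normalized hyeq.1.ne'])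
    (normalized_eq_normalized_of_succ hs hx hy hxeq.1.ne' hyeq.1.ne')
  rw [hx.normalized_eq hxeq.1.ne' (lt_add_one s) hs, hy.normalized_eq_zero le_rfl, sub_zero]
    at hdiff
  simp only [Nat.add_sub_cancel] at hdiff
  have hr_lt : r ⟨s, by omega⟩ < r ⟨s + 1, by omega⟩ := hr _ _ (Fin.mk_lt_mk.2 (lt_add_one s))
  have hcd : cd ≠ 0 := by
    rintro rfl
    rw [div_zero, mul_zero] at hdiff
    linarith
  have key : (μ ⟨s + 1, by omega⟩ - μ (Fin.last (n+1))) * (r ⟨s + 1, by omega⟩ - r ⟨s, by omega⟩)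
      = cd * (r ⟨s + 1, by omega⟩ - r ⟨s, by omega⟩) := by
    field_simp at hdiff
    linear_combination (-cd) * hobj - hdiff
  exact mul_right_cancel₀ (sub_ne_zero.2 hr_lt.ne') key

end TypeIIPt

/-- there cannot exist three distinct optimal Type II extreme points
with consecutive starting indices s, s+1, s+2. -/
theorem no_three_consecutive_typeII_optimal
    (n : ℕ) (r : Fin (n+1) → ℝ) (cd ε : ℝ)
    (hr : ∀ i j : Fin (n+1), i < j → r i < r j)
    (μ : Fin (n+2) → ℝ) (hμ : ∀ j : Fin (n+1), μ j.succ < μ j.castSucc)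
    (Λ : Fin (n+1) → Fin (n+2) → ℝ)
    (hΛ : ∀ i j, Λ i j =
      cd * (if (j : ℕ) ≤ (i : ℕ) then 1 else 0) - r i + (r (Fin.last n) + ε))
    (x y z : Fin (n+2) → ℝ)
    (hx : InPoly n Λ x) (hy : InPoly n Λ y) (hz : InPoly n Λ z)
    (s : ℕ) (hs : s + 2 ≤ n)
    (hxII : TypeIIPt n Λ r cd x ⟨s, by omega⟩)
    (hyII : TypeIIPt n Λ r cd y ⟨s + 1, by omega⟩)
    (hzII : TypeIIPt n Λ r cd z ⟨s + 2, by omega⟩)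
    (hxeq : CorrespondsToEq n Λ μ x) (hyeq : CorrespondsToEq n Λ μ y)
    (hzeq : CorrespondsToEq n Λ μ z) :
    False := by
  have hxy := TypeIIPt.sub_mu_last_eq_of_correspondsToEq hr hΛ (by omega) hx hy hxII hyII hxeq hyeq
  have hyz := TypeIIPt.sub_mu_last_eq_of_correspondsToEq hr hΛ (by omega) hy hz hyII hzII hyeq hzeq
  have hμ' : μ ⟨s + 2, by omega⟩ < μ ⟨s + 1, by omega⟩ := hμ ⟨s + 1, by omega⟩
  linarith
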